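/- Let B be an infinite primitive set of positive integers and assume that the closure in H of Δ(ℤ) ∩ W equals W. Then for every b ∈ B and every r with 1 ≤ r ≤ b − 1, the set F_B ∩ (bℤ + r) is nonempty; i.e., the support of η meets every nonzero residue class modulo every b ∈ B. -/

import Mathlib

open Set MeasureTheory Filter Topology

namespace BFree

/-- The ambient compact group `∏_{b ∈ B} ℤ/bℤ`. -/
abbrev Gspace (B : Set ℕ+) : Type := ∀ b : B, ZMod ((b : ℕ+) : ℕ)

/-- The diagonal embedding `Δ : ℤ → ∏_{b ∈ B} ℤ/bℤ`. -/
def delta (B : Set ℕ+) : ℤ →+ Gspace B where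
  toFun n := fun b => (n : ZMod ((b : ℕ+) : ℕ))
  map_zero' := by funext b; simp
  map_add' m n := by funext b; simp

/-- `H`, the closure of `Δ(ℤ)`, as a (closed) subgroup of `Gspace B`. -/
def Hgrp (B : Set ℕ+) : AddSubgroup (Gspace B) :=
  (delta B).range.topologicalClosure

/-- `H` as a compact topological group. -/
abbrev Hspace (B : Set ℕ+) : Type := ↥(Hgrp B)

instance (B : Set ℕ+) : CompactSpace (Hspace B) :=
  isCompact_iff_compactSpace.mp
    (IsClosed.isCompact (AddSubgroup.isClosed_topologicalClosure _))

instance (B : Set ℕ+) : BorelSpace (Hspace B) := Subtype.borelSpace _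

/-- The window `W = {h ∈ H : h_b ≠ 0 for all b ∈ B}`. -/
def window (B : Set ℕ+) : Set (Hspace B) :=
  {h | ∀ b : B, (h : Gspace B) b ≠ 0}

/-- `Δ(n)` as an element of `H`. -/
def deltaH (B : Set ℕ+) (n : ℤ) : Hspace B :=
  ⟨delta B n, (delta B).range.le_topologicalClosure ⟨n, rfl⟩⟩

/-- The set of multiples `M_B ⊆ ℤ` of a set `B` of positive integers. -/
def MultSet (B : Set ℕ+) : Set ℤ := {n | ∃ b ∈ B, ((b : ℕ) : ℤ) ∣ n}

/-- The `B`-free set `F_B = ℤ ∖ M_B`. -/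
def FreeSet (B : Set ℕ+) : Set ℤ := {n | ∀ b ∈ B, ¬ ((b : ℕ) : ℤ) ∣ n}

/-- Set of multiples of a set of natural numbers. -/
def MultSetN (C : Set ℕ) : Set ℤ := {n | ∃ c ∈ C, (c : ℤ) ∣ n}

/-- Free set of a set of natural numbers. -/
def FreeSetN (C : Set ℕ) : Set ℤ := {n | ∀ c ∈ C, ¬ (c : ℤ) ∣ n}

/-- `#(M ∩ [1, N]) / N`. -/
noncomputable def densSeq (M : Set ℤ) (N : ℕ) : ℝ :=
  (Nat.card ↥(M ∩ Set.Icc (1 : ℤ) (N : ℤ)) : ℝ) / N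

/-- Lower (asymptotic) density of a set of integers. -/
noncomputable def lowerDensity (M : Set ℤ) : ℝ := Filter.liminf (densSeq M) Filter.atTop

/-- Upper (asymptotic) density of a set of integers. -/
noncomputable def upperDensity (M : Set ℤ) : ℝ := Filter.limsup (densSeq M) Filter.atTop

/-- `B` is taut if removing any element strictly decreases the lower density
of the set of multiples. -/
def Taut (B : Set ℕ+) : Prop :=
  ∀ b ∈ B, lowerDensity (MultSet (B \ {b})) < lowerDensity (MultSet B)

/-- `B` is primitive if no element divides another. -/
def Primitive (B : Set ℕ+) : Prop :=
  ∀ b ∈ B, ∀ b' ∈ B, (b : ℕ) ∣ (b' : ℕ) → b = b'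

/-- `lcm(S)` for a finite set of positive integers. -/
def lcmS (S : Finset ℕ+) : ℕ := S.lcm fun b => (b : ℕ)

/-- `A_S = {gcd(b, lcm S) : b ∈ B}`. -/
def ASet (B : Set ℕ+) (S : Finset ℕ+) : Set ℕ :=
  {m | ∃ b ∈ B, m = Nat.gcd (b : ℕ) (lcmS S)}

/-- The cylinder set `U_S(h) ⊆ H`. -/
def cyl (B : Set ℕ+) (S : Finset ℕ+) (hS : ↑S ⊆ B) (h : Hspace B) : Set (Hspace B) :=
  {h' | ∀ b, ∀ hb : b ∈ S, (h' : Gspace B) ⟨b, hS hb⟩ = (h : Gspace B) ⟨b, hS hb⟩}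

/-- `E = ⋃_{S ⊆ B finite} F_{A_S}`. -/
def Eset (B : Set ℕ+) : Set ℤ :=
  ⋃ (S : Finset ℕ+) (_ : ↑S ⊆ B), FreeSetN (ASet B S)

/-- `A_∞`. -/
def Ainfty (B : Set ℕ+) : Set ℕ :=
  {n | ∀ S : Finset ℕ+, ↑S ⊆ B →
    ∃ S' : Finset ℕ+, S ⊆ S' ∧ ↑S' ⊆ B ∧ n ∈ ASet B S' ∧ ∀ b ∈ S', (b : ℕ) ≠ n}

/-- The indicator `η` of the `B`-free set, as a point of `{0,1}^ℤ`. -/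
noncomputable def eta (B : Set ℕ+) : ℤ → Bool :=
  fun n => @decide (n ∈ FreeSet B) (Classical.propDecidable _)

/-- The left shift on `{0,1}^ℤ`, iterated `k` times (`k ∈ ℤ`). -/
def shift (k : ℤ) (x : ℤ → Bool) : ℤ → Bool := fun n => x (n + k)

/-- The orbit closure `X_η` of `η` in `{0,1}^ℤ`. -/
noncomputable def Xeta (B : Set ℕ+) : Set (ℤ → Bool) :=
  closure {x | ∃ k : ℤ, x = shift k (eta B)}


/-! By compactness of `H` it suffices to find, for each finite `S ⊆ B`, an integer
`n ≡ r (mod b)` divisible by no `c ∈ S`: then the closed sets `{h_b = r} ∩ ⋂_{c ∈ S} {h_c ≠ 0}`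
have a common point `w ∈ W` with `w_b = r`. Since `w` lies in the closure of `Δ(ℤ) ∩ W`, the
open set `{h_b = r}` contains some `Δ m ∈ W`, i.e. a `B`-free `m ≡ r (mod b)`.

For the finite problem, primitivity leaves `b` as the only `c ∈ S` dividing `b`, and `b ∤ r`.
Every other `c` is divisible by `p ^ (v_p(b) + 1)` for some prime `p`; the `t` with
`p ^ (v_p(b) + 1) ∣ r + b t` form at most one residue class mod `p`, so by the Chinese remainder
theorem some `n = r + b t` avoids all these prime powers. -/

theorem modEq_of_pow_succ_factorization_dvd {p b : ℕ} (hp : p.Prime) (hb : b ≠ 0) {r : ℤ}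
    {t t' : ℕ} (ht : (p : ℤ) ^ (b.factorization p + 1) ∣ r + b * t)
    (ht' : (p : ℤ) ^ (b.factorization p + 1) ∣ r + b * t') : t ≡ t' [MOD p] := by
  rw [Nat.modEq_iff_dvd]
  by_contra hpd
  have hcop : IsCoprime ((p : ℤ) ^ (b.factorization p + 1)) ((t' : ℤ) - t) :=
    ((Nat.prime_iff_prime_int.mp hp).coprime_iff_not_dvd.mpr hpd).pow_left
  have hdiff : (p : ℤ) ^ (b.factorization p + 1) ∣ b * ((t' : ℤ) - t) := by
    have := dvd_sub ht' ht
    rwa [show r + b * t' - (r + b * t) = (b : ℤ) * ((t' : ℤ) - t) by ring] at this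
  exact Nat.pow_succ_factorization_not_dvd hb hp
    (by exact_mod_cast hcop.dvd_of_dvd_mul_right hdiff)

theorem exists_residue_not_pow_succ_factorization_dvd {p b : ℕ} (hp : p.Prime) (hb : b ≠ 0)
    (r : ℤ) : ∃ τ : ℕ, ∀ t : ℕ, t ≡ τ [MOD p] →
      ¬ (p : ℤ) ^ (b.factorization p + 1) ∣ r + b * t := by
  by_cases hbad : ∃ t₀ : ℕ, (p : ℤ) ^ (b.factorization p + 1) ∣ r + b * t₀
  · obtain ⟨t₀, ht₀⟩ := hbad
    refine ⟨t₀ + 1, fun t ht hdvd => hp.not_dvd_one ?_⟩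
    have hsucc : t₀ ≡ t₀ + 1 [MOD p] :=
      (modEq_of_pow_succ_factorization_dvd hp hb ht₀ hdvd).trans ht
    simpa using (Nat.modEq_iff_dvd' (Nat.le_succ t₀)).mp hsucc
  · push Not at hbad
    exact ⟨0, fun t _ => hbad t⟩

theorem exists_prime_pow_succ_factorization_dvd_of_not_dvd {b c : ℕ} (hb : b ≠ 0)
    (hc : c ≠ 0) (hcb : ¬ c ∣ b) : ∃ p, p.Prime ∧ p ^ (b.factorization p + 1) ∣ c := by
  rw [← Nat.factorization_le_iff_dvd hc hb, Finsupp.le_def] at hcb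
  push Not at hcb
  obtain ⟨p, hp⟩ := hcb
  have hpc : p ∈ c.primeFactors := by
    rw [← Nat.support_factorization]
    exact Finsupp.mem_support_iff.mpr (by omega)
  exact ⟨p, Nat.prime_of_mem_primeFactors hpc,
    (Nat.pow_dvd_pow p hp).trans (Nat.ordProj_dvd c p)⟩

theorem exists_modEq_forall_not_dvd {b : ℕ} (hb : b ≠ 0) (r : ℤ) (S : Finset ℕ)
    (hS₀ : ∀ c ∈ S, c ≠ 0) (hS : ∀ c ∈ S, c ∣ b → ¬ (c : ℤ) ∣ r) :
    ∃ n : ℤ, (b : ℤ) ∣ n - r ∧ ∀ c ∈ S, ¬ (c : ℤ) ∣ n := by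
  choose! τ hτ using fun (p : ℕ) (hp : p.Prime) =>
    exists_residue_not_pow_succ_factorization_dvd hp hb r
  let P := S.biUnion Nat.primeFactors
  have hP : ∀ p ∈ P, p.Prime := fun p hp => by
    obtain ⟨c, -, hpc⟩ := Finset.mem_biUnion.mp hp
    exact Nat.prime_of_mem_primeFactors hpc
  obtain ⟨t, ht⟩ := Nat.chineseRemainderOfFinset τ id P (fun p hp => (hP p hp).ne_zero)
    (fun p hp q hq hpq => (Nat.coprime_primes (hP p hp) (hP q hq)).mpr hpq)
  refine ⟨r + b * t, ⟨t, by ring⟩, fun c hc hdvd => ?_⟩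
  by_cases hcb : c ∣ b
  · refine hS c hc hcb ?_
    simpa using dvd_sub hdvd ((Int.natCast_dvd_natCast.mpr hcb).mul_right t)
  · obtain ⟨p, hp, hpc⟩ := exists_prime_pow_succ_factorization_dvd_of_not_dvd hb (hS₀ c hc) hcb
    have hpP : p ∈ P := Finset.mem_biUnion.mpr ⟨c, hc, Nat.mem_primeFactors.mpr
      ⟨hp, (dvd_pow_self p (Nat.succ_ne_zero _)).trans hpc, hS₀ c hc⟩⟩
    exact hτ p hp t (ht p hpP) ((Int.natCast_dvd_natCast.mpr hpc).trans (by exact_mod_cast hdvd))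

theorem continuous_apply_coe (B : Set ℕ+) (i : B) :
    Continuous fun h : Hspace B => (h : Gspace B) i :=
  (continuous_apply i).comp continuous_subtype_val

theorem deltaH_apply (B : Set ℕ+) (n : ℤ) (i : B) :
    (deltaH B n : Gspace B) i = (n : ZMod ((i : ℕ+) : ℕ)) :=
  rfl

theorem deltaH_mem_window_iff (B : Set ℕ+) (n : ℤ) : deltaH B n ∈ window B ↔ n ∈ FreeSet B := by
  simp only [window, FreeSet, Set.mem_ofPred_eq, deltaH_apply, Ne,
    ZMod.intCast_zmod_eq_zero_iff_dvd, Subtype.forall]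

theorem exists_mem_window_apply_eq (B : Set ℕ+) (hprim : Primitive B) {b : ℕ+} (hb : b ∈ B)
    (r : ℤ) (hr : ¬ ((b : ℕ) : ℤ) ∣ r) :
    ∃ w ∈ window B, (w : Gspace B) ⟨b, hb⟩ = r := by
  have hfib : IsClosed {h : Hspace B | (h : Gspace B) ⟨b, hb⟩ = r} :=
    (isClosed_discrete {(r : ZMod (b : ℕ))}).preimage (continuous_apply_coe B ⟨b, hb⟩)
  have hfinite : ∀ u : Finset B, ({h : Hspace B | (h : Gspace B) ⟨b, hb⟩ = r} ∩
      ⋂ i ∈ u, {h : Hspace B | (h : Gspace B) i ≠ 0}).Nonempty := by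
    intro u
    have hu₀ : ∀ c ∈ u.image fun i : B => ((i : ℕ+) : ℕ), c ≠ 0 :=
      Finset.forall_mem_image.mpr fun i _ => (i : ℕ+).ne_zero
    have hu : ∀ c ∈ u.image fun i : B => ((i : ℕ+) : ℕ), c ∣ b → ¬ (c : ℤ) ∣ r :=
      Finset.forall_mem_image.mpr fun i _ hib => by rwa [hprim i i.2 b hb hib]
    obtain ⟨n, hnr, hn⟩ := exists_modEq_forall_not_dvd b.ne_zero r _ hu₀ hu
    refine ⟨deltaH B n, ?_, Set.mem_iInter₂.mpr fun i hi => ?_⟩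
    · simp only [Set.mem_ofPred_eq, deltaH_apply]
      exact ((ZMod.intCast_eq_intCast_iff_dvd_sub _ _ _).mpr hnr).symm
    · simp only [Set.mem_ofPred_eq, deltaH_apply, Ne, ZMod.intCast_zmod_eq_zero_iff_dvd]
      exact hn _ (Finset.mem_image_of_mem _ hi)
  obtain ⟨w, hwr, hw⟩ := hfib.isCompact.inter_iInter_nonempty _
    (fun i => (isClosed_discrete {0}ᶜ).preimage (continuous_apply_coe B i)) hfinite
  exact ⟨w, Set.mem_iInter.mp hw, hwr⟩

theorem statement17_general (B : Set ℕ+) (hprim : Primitive B)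
    (hdense : closure (Set.range (deltaH B) ∩ window B) = window B) :
    ∀ b ∈ B, ∀ r : ℤ, 1 ≤ r → r ≤ ((b : ℕ) : ℤ) - 1 →
      ∃ n ∈ FreeSet B, ((b : ℕ) : ℤ) ∣ (n - r) := by
  intro b hb r hr₁ hr₂
  have hr : ¬ ((b : ℕ) : ℤ) ∣ r := fun h => by linarith [Int.le_of_dvd (by omega) h]
  obtain ⟨w, hw, hwr⟩ := exists_mem_window_apply_eq B hprim hb r hr
  rw [← hdense] at hw
  have hfib : IsOpen {h : Hspace B | (h : Gspace B) ⟨b, hb⟩ = r} :=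
    (isOpen_discrete {(r : ZMod (b : ℕ))}).preimage (continuous_apply_coe B ⟨b, hb⟩)
  obtain ⟨_, hmr, ⟨m, rfl⟩, hm⟩ := mem_closure_iff.mp hw _ hfib hwr
  refine ⟨m, (deltaH_mem_window_iff B m).mp hm, ?_⟩
  exact (ZMod.intCast_eq_intCast_iff_dvd_sub _ _ _).mp hmr.symm

/-- If `B` is infinite and primitive and the closure of `Δ(ℤ) ∩ W` in `H`
equals `W`, then for every `b ∈ B` and every `r` with `1 ≤ r ≤ b − 1`, the set
`F_B ∩ (bℤ + r)` is nonempty. -/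
theorem statement17 (B : Set ℕ+) (hB : B.Infinite) (hprim : Primitive B)
    (hdense : closure (Set.range (deltaH B) ∩ window B) = window B) :
    ∀ b ∈ B, ∀ r : ℤ, 1 ≤ r → r ≤ ((b : ℕ) : ℤ) - 1 →
      ∃ n ∈ FreeSet B, ((b : ℕ) : ℤ) ∣ (n - r) :=
  statement17_general B hprim hdense

end BFree
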